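/- Let k be a field, let S be the polynomial ring over k in the variables x₀, …, x_r, let B be an S-module, and let x ∈ S be a homogeneous polynomial of degree 1 such that multiplication by x is injective on B. Let W ⊆ B be a finite-dimensional k-subspace, and suppose that the k-span of { l·w : l ∈ S homogeneous of degree 1, w ∈ W } has k-dimension at most dim_k W. Then for every natural number m, the k-span of { f·w : f ∈ S homogeneous of degree m, w ∈ W } equals x^m·W, the image of W under multiplication by x^m; in particular it has k-dimension equal to dim_k W. -/

import Mathlib

/-- Let `k` be a field, `S = k[x₀, …, x_r]`, `B` an `S`-module, and
`x ∈ S` homogeneous of degree `1` with multiplication by `x` injective on `B`. Let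
`W ⊆ B` be a finite-dimensional `k`-subspace such that the `k`-span of
`{l·w : l ∈ S₁, w ∈ W}` has dimension at most `dim_k W`. Then for every `m`, the `k`-span
of `{f·w : f ∈ S_m, w ∈ W}` equals `x^m·W`; in particular it has dimension `dim_k W`. -/
theorem fibers_stmt15 {k : Type*} [Field k] (r : ℕ)
    (B : Type*) [AddCommGroup B] [Module (MvPolynomial (Fin (r + 1)) k) B]
    [Module k B] [IsScalarTower k (MvPolynomial (Fin (r + 1)) k) B]
    (x : MvPolynomial (Fin (r + 1)) k) (hx : x.IsHomogeneous 1)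
    (hinj : Function.Injective fun b : B => x • b)
    (W : Submodule k B) [FiniteDimensional k ↥W]
    (hspan :
      Module.rank k
          ↥(Submodule.span k
            {z : B | ∃ f : MvPolynomial (Fin (r + 1)) k, ∃ w : B,
              f.IsHomogeneous 1 ∧ w ∈ W ∧ z = f • w}) ≤
        Module.rank k ↥W) :
    ∀ m : ℕ,
      Submodule.span k
          {z : B | ∃ f : MvPolynomial (Fin (r + 1)) k, ∃ w : B,
            f.IsHomogeneous m ∧ w ∈ W ∧ z = f • w} =
        Submodule.map
          ((LinearMap.lsmul (MvPolynomial (Fin (r + 1)) k) B (x ^ m)).restrictScalars k) W ∧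
      Module.rank k
          ↥(Submodule.span k
            {z : B | ∃ f : MvPolynomial (Fin (r + 1)) k, ∃ w : B,
              f.IsHomogeneous m ∧ w ∈ W ∧ z = f • w}) =
        Module.rank k ↥W := by
  classical
  -- injectivity of multiplication by x^m
  have hinjm : ∀ m : ℕ, Function.Injective fun b : B => (x ^ m) • b := by
    intro m
    induction m with
    | zero => simp only [pow_zero, one_smul]; exact Function.injective_id
    | succ n ih =>
      intro a b hab
      simp only [pow_succ, mul_smul] at hab
      exact hinj (ih hab)
  -- the k-linear map b ↦ x^m • b
  set L : ℕ → (B →ₗ[k] B) :=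
    fun m => (LinearMap.lsmul (MvPolynomial (Fin (r + 1)) k) B (x ^ m)).restrictScalars k
    with hL
  have hLapp : ∀ m (b : B), L m b = (x ^ m) • b := fun m b => rfl
  have hLinj : ∀ m, Function.Injective (L m) := fun m => hinjm m
  -- rank of the image of W under L m
  have hrank : ∀ m, Module.rank k ↥(Submodule.map (L m) W) = Module.rank k ↥W :=
    fun m => ((Submodule.equivMapOfInjective (L m) (hLinj m) W).rank_eq).symm
  -- the spans in question
  set V : ℕ → Submodule k B := fun m =>
    Submodule.span k {z : B | ∃ f : MvPolynomial (Fin (r + 1)) k, ∃ w : B,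
      f.IsHomogeneous m ∧ w ∈ W ∧ z = f • w} with hV
  -- x^m • W ⊆ V m
  have hle : ∀ m, Submodule.map (L m) W ≤ V m := by
    intro m z hz
    obtain ⟨w, hw, rfl⟩ := hz
    exact Submodule.subset_span ⟨x ^ m, w, by simpa using hx.pow m, hw, rfl⟩
  -- degree-one case, using the rank hypothesis
  have hWfin : Module.rank k ↥W < Cardinal.aleph0 := Module.rank_lt_aleph0 k ↥W
  have hV1 : V 1 = Submodule.map (L 1) W := by
    have hfin : FiniteDimensional k ↥(V 1) :=
      Module.rank_lt_aleph0_iff.mp (lt_of_le_of_lt hspan hWfin)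
    refine (Submodule.eq_of_le_of_finrank_le (hle 1) ?_).symm
    have h1 : Module.rank k ↥(V 1) ≤ Module.rank k ↥(Submodule.map (L 1) W) := by
      rw [hrank 1]; exact hspan
    have h2 : Module.rank k ↥(Submodule.map (L 1) W) < Cardinal.aleph0 := by
      rw [hrank 1]; exact hWfin
    simpa [Module.finrank] using Cardinal.toNat_le_toNat h1 h2
  -- key lemma: monomials of degree n send W into x^n • W
  have key : ∀ n : ℕ, ∀ d : Fin (r + 1) →₀ ℕ, d.degree = n → ∀ c : k, ∀ w ∈ W,
      (MvPolynomial.monomial d c) • w ∈ Submodule.map (L n) W := by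
    intro n
    induction n with
    | zero =>
      intro d hd c w hw
      have hd0 : d = 0 := (Finsupp.degree_eq_zero_iff d).mp hd
      refine ⟨c • w, W.smul_mem c hw, ?_⟩
      rw [hLapp, pow_zero, one_smul, hd0, MvPolynomial.monomial_zero',
        ← MvPolynomial.algebraMap_eq, algebraMap_smul]
    | succ n ih =>
      intro d hd c w hw
      -- find a variable occurring in d
      have hdne : d ≠ 0 := by
        intro h
        rw [h, map_zero] at hd
        exact (Nat.succ_ne_zero n) hd.symm
      obtain ⟨i, hi⟩ : ∃ i, d i ≠ 0 := by
        by_contra h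
        push_neg at h
        exact hdne (Finsupp.ext fun i => h i)
      set d' : Fin (r + 1) →₀ ℕ := d - Finsupp.single i 1 with hd'
      have hsingle_le : Finsupp.single i 1 ≤ d := by
        rw [Finsupp.single_le_iff]
        omega
      have hdd : d' + Finsupp.single i 1 = d := by
        rw [hd']
        exact tsub_add_cancel_of_le hsingle_le
      have hdegsingle : (Finsupp.single i 1 : Fin (r + 1) →₀ ℕ).degree = 1 := by
        exact Finsupp.degree_single i 1
      have hdeg' : d'.degree = n := by
        have h1 : d.degree = d'.degree + (Finsupp.single i 1).degree := by
          rw [← hdd]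
          simp only [Finsupp.degree_eq_weight_one]
          exact map_add _ _ _
        rw [hdegsingle] at h1
        omega
      -- X i • w lies in x • W
      have hXiw : (MvPolynomial.X i : MvPolynomial (Fin (r + 1)) k) • w ∈
          Submodule.map (L 1) W := by
        rw [← hV1]
        exact Submodule.subset_span ⟨MvPolynomial.X i, w,
          MvPolynomial.isHomogeneous_X k i, hw, rfl⟩
      obtain ⟨w', hw', hw'eq⟩ := hXiw
      rw [hLapp, pow_one] at hw'eq
      -- rewrite the monomial
      have hmono : (MvPolynomial.monomial d c : MvPolynomial (Fin (r + 1)) k) =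
          MvPolynomial.monomial d' c * MvPolynomial.X i := by
        rw [← hdd, MvPolynomial.monomial_add_single, pow_one]
      obtain ⟨w'', hw'', hw''eq⟩ := ih d' hdeg' c w' hw'
      rw [hLapp] at hw''eq
      refine ⟨w'', hw'', ?_⟩
      rw [hLapp, hmono, mul_smul, ← hw'eq,
        smul_comm (MvPolynomial.monomial d' c : MvPolynomial (Fin (r + 1)) k) x w',
        ← hw''eq, ← mul_smul, ← pow_succ']
  -- conclude: V m = x^m • W
  have hmain : ∀ m, V m = Submodule.map (L m) W := by
    intro m
    refine le_antisymm ?_ (hle m)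
    rw [hV, Submodule.span_le]
    rintro z ⟨f, w, hf, hw, rfl⟩
    rw [← MvPolynomial.support_sum_monomial_coeff f, Finset.sum_smul]
    refine Submodule.sum_mem _ fun d hd => ?_
    have hdeg : d.degree = m := by
      have := hf (MvPolynomial.mem_support_iff.mp hd)
      rwa [Finsupp.degree_eq_weight_one]
    exact key m d hdeg _ w hw
  intro m
  have h := hmain m
  have hr : Module.rank k ↥(V m) = Module.rank k ↥W := by rw [hmain m, hrank m]
  exact ⟨h, hr⟩
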